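/- arXiv:2503.00129 — 2 statements merged into one kernel-verified Lean document; each statement's English description precedes it below -/
import Mathlib

section
/- Fix 0 ≤ α < 1, M, N ≥ 1, and y ∈ ℝ. If x ↦ f(x,y) is C¹ in x with |∂f/∂x| ≳ N, then ∫_{|x|<M} ⟨f(x,y)⟩^{−α} dx ≲ M^{1−α} N^{−α}. -/
open MeasureTheory

noncomputable def jb (x : ℝ) : ℝ := Real.sqrt (1 + x ^ 2)

lemma jb_pos (x : ℝ) : 0 < jb x := Real.sqrt_pos.2 (by positivity)

lemma one_le_jb (x : ℝ) : 1 ≤ jb x := by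
  have : (1:ℝ) = Real.sqrt 1 := (Real.sqrt_one).symm
  rw [this]
  exact Real.sqrt_le_sqrt (by nlinarith)

lemma abs_le_jb (x : ℝ) : |x| ≤ jb x := by
  have : |x| = Real.sqrt (x ^ 2) := (Real.sqrt_sq_eq_abs x).symm
  rw [this]
  exact Real.sqrt_le_sqrt (by nlinarith)

lemma jb_continuous : Continuous jb :=
  Real.continuous_sqrt.comp (by continuity)

lemma jb_rpow_cont (α : ℝ) : Continuous (fun u : ℝ => jb u ^ (-α)) :=
  jb_continuous.rpow_const (fun x => Or.inl (jb_pos x).ne')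

lemma jb_rpow_le_one (α : ℝ) (hα : 0 ≤ α) (u : ℝ) : jb u ^ (-α) ≤ 1 := by
  calc jb u ^ (-α) ≤ (1:ℝ) ^ (-α) :=
        Real.rpow_le_rpow_of_nonpos one_pos (one_le_jb u) (by linarith)
    _ = 1 := Real.one_rpow _

lemma jb_rpow_nonneg (α u : ℝ) : 0 ≤ jb u ^ (-α) :=
  Real.rpow_nonneg (jb_pos u).le _

lemma inj_of_deriv (g : ℝ → ℝ) (N : ℝ) (hN : 0 < N) (hg : ContDiff ℝ 1 g)
    (hd : ∀ x, N ≤ |deriv g x|) : Function.Injective g := by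
  have hc : Continuous (deriv g) := hg.continuous_deriv le_rfl
  have hne : ∀ x, deriv g x ≠ 0 := by
    intro x h
    have := hd x
    rw [h, abs_zero] at this
    linarith
  have key : (∀ x, 0 < deriv g x) ∨ (∀ x, deriv g x < 0) := by
    by_contra h
    push_neg at h
    obtain ⟨⟨a, ha⟩, ⟨b, hb⟩⟩ := h
    have ha' : deriv g a < 0 := lt_of_le_of_ne ha (hne a)
    have hb' : 0 < deriv g b := lt_of_le_of_ne hb (Ne.symm (hne b))
    have : (0:ℝ) ∈ Set.Icc (deriv g a) (deriv g b) := ⟨ha'.le, hb'.le⟩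
    obtain ⟨c, hcc⟩ := intermediate_value_univ a b hc this
    exact hne c hcc
  rcases key with h | h
  · exact (strictMono_of_deriv_pos h).injective
  · exact (strictAnti_of_deriv_neg h).injective

lemma icc_bound (α : ℝ) (hα0 : 0 ≤ α) (hα1 : α < 1) (T : ℝ) (hT : 0 < T) :
    ∫ u in Set.Icc (-T) T, jb u ^ (-α) ≤ 2 * T ^ (1 - α) / (1 - α) := by
  have hint : ∀ a b : ℝ, IntervalIntegrable (fun u => jb u ^ (-α)) volume a b :=
    fun a b => (jb_rpow_cont α).intervalIntegrable a b
  have hle : (-T : ℝ) ≤ T := by linarith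
  rw [integral_Icc_eq_integral_Ioc, ← intervalIntegral.integral_of_le hle]
  have hsplit := intervalIntegral.integral_add_adjacent_intervals
    (a := -T) (b := 0) (c := T) (hint _ _) (hint _ _)
  rw [← hsplit]
  have hneg : (∫ u in (-T)..(0:ℝ), jb u ^ (-α)) = ∫ u in (0:ℝ)..T, jb u ^ (-α) := by
    rw [show (∫ u in (0:ℝ)..T, jb u ^ (-α)) = ∫ u in (0:ℝ)..T, jb (-u) ^ (-α) by
      congr 1; ext u; simp [jb, neg_pow]
      , intervalIntegral.integral_comp_neg (fun u => jb u ^ (-α))]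
    simp
  have hhalf : (∫ u in (0:ℝ)..T, jb u ^ (-α)) ≤ T ^ (1 - α) / (1 - α) := by
    have h1 : (∫ u in (0:ℝ)..T, jb u ^ (-α)) ≤ ∫ u in (0:ℝ)..T, u ^ (-α) := by
      rw [intervalIntegral.integral_of_le hT.le, intervalIntegral.integral_of_le hT.le]
      refine setIntegral_mono_on ((hint 0 T).1) ((intervalIntegral.intervalIntegrable_rpow' (by linarith)).1) measurableSet_Ioc ?_
      intro u hu
      exact Real.rpow_le_rpow_of_nonpos hu.1 ((le_abs_self u).trans (abs_le_jb u)) (by linarith)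
    have h2 : (∫ u in (0:ℝ)..T, u ^ (-α)) = T ^ (1 - α) / (1 - α) := by
      rw [integral_rpow (Or.inl (by linarith))]
      rw [Real.zero_rpow (by linarith : -α + 1 ≠ 0)]
      norm_num
      rw [show -α + 1 = 1 - α by ring]
    linarith
  calc (∫ u in (-T)..(0:ℝ), jb u ^ (-α)) + ∫ u in (0:ℝ)..T, jb u ^ (-α)
      ≤ T ^ (1 - α) / (1 - α) + T ^ (1 - α) / (1 - α) := by rw [hneg]; linarith
    _ = 2 * T ^ (1 - α) / (1 - α) := by ring

theorem stmt4 (α : ℝ) (hα0 : 0 ≤ α) (hα1 : α < 1) :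
    ∃ C > 0, ∀ M N y : ℝ, 1 ≤ M → 1 ≤ N →
      ∀ f : ℝ → ℝ → ℝ, ContDiff ℝ 1 (fun x => f x y) →
      (∀ x, N ≤ |deriv (fun x' => f x' y) x|) →
      (∫ x in {x : ℝ | |x| < M}, (jb (f x y)) ^ (-α)) ≤ C * M ^ (1 - α) * N ^ (-α) := by
  have h1α : 0 < 1 - α := by linarith
  refine ⟨2 + 2 / (1 - α), by positivity, ?_⟩
  intro M N y hM hN f hf hfd
  set g : ℝ → ℝ := fun x => f x y with hgdef
  have hM0 : (0:ℝ) < M := by linarith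
  have hN0 : (0:ℝ) < N := by linarith
  set T : ℝ := M * N with hTdef
  have hT0 : 0 < T := by positivity
  have hset : {x : ℝ | |x| < M} = Set.Ioo (-M) M := by ext x; simp [abs_lt]
  rw [hset]
  set S := Set.Ioo (-M) M with hSdef
  have hSm : MeasurableSet S := measurableSet_Ioo
  have hS_fin : volume S < ⊤ := by
    rw [hSdef, Real.volume_Ioo]
    exact ENNReal.ofReal_lt_top
  have hSvol : (volume S).toReal = 2 * M := by
    rw [hSdef, Real.volume_Ioo, ENNReal.toReal_ofReal (by linarith)]
    ring
  have hgc : Continuous g := hf.continuous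
  have hginj : Function.Injective g := inj_of_deriv g N hN0 hf hfd
  have hder : ∀ x ∈ S, HasDerivWithinAt g (deriv g x) S x :=
    fun x _ => ((hf.differentiable one_ne_zero x).hasDerivAt).hasDerivWithinAt
  set ψ : ℝ → ℝ := Set.indicator (Set.Icc (-T) T) (fun u => jb u ^ (-α)) with hψdef
  have hψ_nonneg : ∀ u, 0 ≤ ψ u := fun u =>
    Set.indicator_nonneg (fun v _ => jb_rpow_nonneg α v) u
  have hψ_le_one : ∀ u, ψ u ≤ 1 := fun u =>
    Set.indicator_le' (fun v _ => jb_rpow_le_one α hα0 v) (fun _ _ => zero_le_one) u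
  have hψ_meas : Measurable ψ :=
    (jb_rpow_cont α).measurable.indicator measurableSet_Icc
  have hψ_int : Integrable ψ := by
    rw [hψdef, integrable_indicator_iff measurableSet_Icc]
    exact (jb_rpow_cont α).continuousOn.integrableOn_compact isCompact_Icc
  -- pointwise bound
  have hpt : ∀ x, jb (g x) ^ (-α) ≤ T ^ (-α) + ψ (g x) := by
    intro x
    by_cases hx : g x ∈ Set.Icc (-T) T
    · rw [hψdef, Set.indicator_of_mem hx]
      have : 0 ≤ T ^ (-α) := Real.rpow_nonneg hT0.le _
      linarith
    · rw [hψdef, Set.indicator_of_notMem hx]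
      have habs : T < |g x| := by
        simp only [Set.mem_Icc, not_and_or, not_le] at hx
        rcases hx with h | h
        · rw [abs_of_neg (by linarith)]; linarith
        · rw [abs_of_pos (by linarith)]; linarith
      have : jb (g x) ^ (-α) ≤ T ^ (-α) :=
        Real.rpow_le_rpow_of_nonpos hT0 (habs.le.trans (abs_le_jb _)) (by linarith)
      linarith
  -- integrabilities
  have h_const_int : IntegrableOn (fun _ : ℝ => T ^ (-α)) S :=
    integrableOn_const hS_fin.ne
  have h_one_int : IntegrableOn (fun _ : ℝ => (1:ℝ)) S :=
    integrableOn_const hS_fin.ne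
  have h_int1 : IntegrableOn (fun x => jb (g x) ^ (-α)) S :=
    ((jb_rpow_cont α).comp hgc).continuousOn.integrableOn_compact isCompact_Icc |>.mono_set Set.Ioo_subset_Icc_self
  have h_int2 : IntegrableOn (fun x => ψ (g x)) S := by
    refine Integrable.mono' h_one_int ((hψ_meas.comp hgc.measurable).aestronglyMeasurable) ?_
    filter_upwards with x
    rw [Real.norm_eq_abs, abs_of_nonneg (hψ_nonneg _)]
    exact hψ_le_one _
  have h_int3 : IntegrableOn (fun x => |deriv g x| • ψ (g x)) S :=
    (integrableOn_image_iff_integrableOn_abs_deriv_smul hSm hder hginj.injOn ψ).1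
      (hψ_int.integrableOn)
  -- change of variables
  have hcov : (∫ x in S, |deriv g x| • ψ (g x)) = ∫ u in g '' S, ψ u :=
    (integral_image_eq_integral_abs_deriv_smul hSm hder hginj.injOn ψ).symm
  have key : N * ∫ x in S, ψ (g x) ≤ 2 * T ^ (1 - α) / (1 - α) := by
    have h1 : N * ∫ x in S, ψ (g x) = ∫ x in S, N * ψ (g x) :=
      (integral_const_mul N _).symm
    have h2 : (∫ x in S, N * ψ (g x)) ≤ ∫ x in S, |deriv g x| • ψ (g x) := by
      refine integral_mono (h_int2.const_mul N) h_int3 ?_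
      intro x
      simp only [smul_eq_mul]
      exact mul_le_mul_of_nonneg_right (hfd x) (hψ_nonneg _)
    have h4 : (∫ u in g '' S, ψ u) ≤ ∫ u, ψ u :=
      setIntegral_le_integral hψ_int (ae_of_all _ hψ_nonneg)
    have h5 : (∫ u, ψ u) = ∫ u in Set.Icc (-T) T, jb u ^ (-α) := by
      rw [hψdef, integral_indicator measurableSet_Icc]
    have h6 := icc_bound α hα0 hα1 T hT0
    linarith [hcov ▸ h2]
  -- main computation
  have main : (∫ x in S, jb (g x) ^ (-α)) ≤ 2 * M * T ^ (-α) + (2 * T ^ (1 - α) / (1 - α)) / N := by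
    have step1 : (∫ x in S, jb (g x) ^ (-α)) ≤ ∫ x in S, (T ^ (-α) + ψ (g x)) :=
      integral_mono h_int1 (h_const_int.add h_int2) hpt
    have step2 : (∫ x in S, (T ^ (-α) + ψ (g x))) = 2 * M * T ^ (-α) + ∫ x in S, ψ (g x) := by
      rw [integral_add h_const_int h_int2, setIntegral_const, measureReal_def, hSvol, smul_eq_mul]
    have step3 : (∫ x in S, ψ (g x)) ≤ (2 * T ^ (1 - α) / (1 - α)) / N := by
      rw [le_div_iff₀ hN0]
      linarith [key]
    linarith
  -- arithmetic
  have e1 : T ^ (-α) = M ^ (-α) * N ^ (-α) := Real.mul_rpow hM0.le hN0.le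
  have e2 : T ^ (1 - α) = M ^ (1 - α) * N ^ (1 - α) := Real.mul_rpow hM0.le hN0.le
  have e3 : M * M ^ (-α) = M ^ (1 - α) := by
    rw [show (1 - α) = 1 + (-α) by ring, Real.rpow_add hM0, Real.rpow_one]
  have e4 : N ^ (1 - α) / N = N ^ (-α) := by
    rw [show (1 - α) = 1 + (-α) by ring, Real.rpow_add hN0, Real.rpow_one]
    field_simp
  calc (∫ x in S, jb (g x) ^ (-α))
      ≤ 2 * M * T ^ (-α) + (2 * T ^ (1 - α) / (1 - α)) / N := main
    _ = 2 * (M ^ (1 - α) * N ^ (-α)) + (2 / (1 - α)) * (M ^ (1 - α) * N ^ (-α)) := by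
        rw [e1, e2]
        rw [show 2 * M * (M ^ (-α) * N ^ (-α)) = 2 * ((M * M ^ (-α)) * N ^ (-α)) by ring, e3]
        rw [show (2 * (M ^ (1-α) * N ^ (1-α)) / (1-α)) / N = (2 / (1-α)) * (M ^ (1-α) * (N ^ (1-α) / N)) by field_simp, e4]
    _ = (2 + 2 / (1 - α)) * M ^ (1 - α) * N ^ (-α) := by ring
end

section
/- For 0 < a < b with a ≪ 1 ≪ b, and −1/2 < s < 1/2, the weight m(ξ₂) = ||ξ₂|−1|^{1/2}(|ξ₂|+1)^{2s−1/2} satisfies ∫_a^b m ≲ (b−a)^{2s+1} and ∫_a^b m^{−1} ≲ (b−a)^{−2s+1}, so that (b−a)^{−2}(∫_a^b m)(∫_a^b m^{−1}) ≲ 1. -/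
open MeasureTheory

noncomputable def mwt (s x : ℝ) : ℝ := |(|x| - 1)| ^ ((1 : ℝ) / 2) * (|x| + 1) ^ (2 * s - 1 / 2)

lemma mwt_continuous (s : ℝ) : Continuous (mwt s) := by
  unfold mwt
  apply Continuous.mul
  · exact ((continuous_abs.sub continuous_const).abs).rpow_const fun x => Or.inr (by norm_num)
  · exact (continuous_abs.add continuous_const).rpow_const fun x => Or.inl (ne_of_gt (add_pos_of_nonneg_of_pos (abs_nonneg x) one_pos))

lemma mwt_nonneg (s x : ℝ) : 0 ≤ mwt s x := by
  unfold mwt; positivity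

lemma mwt_inv_eq (s x : ℝ) (hx : 0 < x) :
    (mwt s x)⁻¹ = |x - 1| ^ (-(1 / 2) : ℝ) * (x + 1) ^ (1 / 2 - 2 * s) := by
  unfold mwt
  rw [abs_of_pos hx, mul_inv, ← Real.rpow_neg (abs_nonneg _),
    ← Real.rpow_neg (by positivity), show -(2 * s - 1 / 2) = 1 / 2 - 2 * s by ring]

set_option maxHeartbeats 1000000 in
theorem stmt8 (s : ℝ) (hs1 : -(1 / 2) < s) (hs2 : s < 1 / 2) :
    ∃ C > 0, ∀ a b : ℝ, 0 < a → a ≤ 1 / 2 → 2 ≤ b →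
      (∫ x in a..b, mwt s x) ≤ C * (b - a) ^ (2 * s + 1) ∧
      (∫ x in a..b, (mwt s x)⁻¹) ≤ C * (b - a) ^ (-(2 * s) + 1) ∧
      (b - a) ^ (-(2 : ℝ)) * (∫ x in a..b, mwt s x) * (∫ x in a..b, (mwt s x)⁻¹) ≤ C := by
  have hp1 : (0 : ℝ) < 2 * s + 1 := by linarith
  have hp2 : (0 : ℝ) < -(2 * s) + 1 := by linarith
  set C1 : ℝ := 4 / (2 * s + 1) with hC1
  set C2 : ℝ := 36 + 8 / (-(2 * s) + 1) with hC2
  have hC1pos : 0 < C1 := by positivity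
  have hC2pos : 0 < C2 := by positivity
  refine ⟨C1 + C2 + C1 * C2, by positivity, ?_⟩
  intro a b ha ha2 hb
  have hab : a ≤ b := by linarith
  have hba : (3 : ℝ) / 2 ≤ b - a := by linarith
  have hbapos : (0 : ℝ) < b - a := by linarith
  have hb2a : b + 1 ≤ 2 * (b - a) := by linarith
  -- First integral bound
  have habs : ∀ x ∈ Set.Icc a b, mwt s x ≤ (x + 1) ^ (2 * s) := by
    intro x hx
    have hx0 : 0 < x := lt_of_lt_of_le ha hx.1
    have h1 : |x| = x := abs_of_pos hx0
    have h2 : |(|x| - 1)| ≤ x + 1 := by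
      rw [h1, abs_le]; constructor <;> linarith
    have h3 : |(|x| - 1)| ^ ((1 : ℝ) / 2) ≤ (x + 1) ^ ((1 : ℝ) / 2) :=
      Real.rpow_le_rpow (abs_nonneg _) h2 (by norm_num)
    calc mwt s x ≤ (x + 1) ^ ((1 : ℝ) / 2) * (x + 1) ^ (2 * s - 1 / 2) := by
          unfold mwt
          rw [h1]
          rw [h1] at h3
          exact mul_le_mul_of_nonneg_right h3 (Real.rpow_nonneg (by linarith) _)
      _ = (x + 1) ^ (2 * s) := by
          rw [← Real.rpow_add (by linarith)]; norm_num
  have hint1 : IntervalIntegrable (mwt s) volume a b :=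
    (mwt_continuous s).intervalIntegrable a b
  have hint2 : IntervalIntegrable (fun x : ℝ => (x + 1) ^ (2 * s)) volume a b := by
    apply ContinuousOn.intervalIntegrable
    apply ContinuousOn.rpow_const (by fun_prop)
    intro x hx
    rw [Set.uIcc_of_le hab] at hx
    exact Or.inl (by nlinarith [hx.1])
  have hI1 : (∫ x in a..b, mwt s x) ≤ C1 * (b - a) ^ (2 * s + 1) := by
    have step1 : (∫ x in a..b, mwt s x) ≤ ∫ x in a..b, (x + 1) ^ (2 * s) :=
      intervalIntegral.integral_mono_on hab hint1 hint2 habs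
    have step2 : (∫ x in a..b, (x + 1) ^ (2 * s)) =
        ((b + 1) ^ (2 * s + 1) - (a + 1) ^ (2 * s + 1)) / (2 * s + 1) := by
      rw [intervalIntegral.integral_comp_add_right (fun y : ℝ => y ^ (2 * s)) 1,
        integral_rpow (Or.inl (by linarith))]
    have step3 : (b + 1) ^ (2 * s + 1) ≤ 4 * (b - a) ^ (2 * s + 1) := by
      calc (b + 1) ^ (2 * s + 1) ≤ (2 * (b - a)) ^ (2 * s + 1) :=
            Real.rpow_le_rpow (by linarith) hb2a (by linarith)
        _ = 2 ^ (2 * s + 1) * (b - a) ^ (2 * s + 1) :=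
            Real.mul_rpow (by norm_num) (by linarith)
        _ ≤ 4 * (b - a) ^ (2 * s + 1) := by
            apply mul_le_mul_of_nonneg_right _ (Real.rpow_nonneg (by linarith) _)
            calc (2 : ℝ) ^ (2 * s + 1) ≤ 2 ^ (2 : ℝ) :=
                  Real.rpow_le_rpow_of_exponent_le one_le_two (by linarith)
              _ = 4 := by
                  rw [show (2 : ℝ) = ((2 : ℕ) : ℝ) by norm_num, Real.rpow_natCast]
                  norm_num
    have h4 : 0 ≤ (a + 1) ^ (2 * s + 1) := Real.rpow_nonneg (by linarith) _
    calc (∫ x in a..b, mwt s x) ≤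
          ((b + 1) ^ (2 * s + 1) - (a + 1) ^ (2 * s + 1)) / (2 * s + 1) := by
          rw [← step2]; exact step1
      _ ≤ (b + 1) ^ (2 * s + 1) / (2 * s + 1) := by
          gcongr
          linarith
      _ ≤ 4 * (b - a) ^ (2 * s + 1) / (2 * s + 1) := by gcongr
      _ = C1 * (b - a) ^ (2 * s + 1) := by rw [hC1]; ring
  -- Second integral bound
  have ha1 : a ≤ 1 := by linarith
  have h12 : (1:ℝ) ≤ 2 := by norm_num
  have geq1 : ∀ x ∈ Set.Icc a 1,
      (mwt s x)⁻¹ = (1 - x) ^ (-(1 / 2) : ℝ) * (x + 1) ^ (1 / 2 - 2 * s) := by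
    intro x hx
    rw [mwt_inv_eq s x (lt_of_lt_of_le ha hx.1), abs_of_nonpos (by linarith [hx.2]), neg_sub]
  have geq2 : ∀ x ∈ Set.Icc (1:ℝ) b,
      (mwt s x)⁻¹ = (x - 1) ^ (-(1 / 2) : ℝ) * (x + 1) ^ (1 / 2 - 2 * s) := by
    intro x hx
    rw [mwt_inv_eq s x (by linarith [hx.1]), abs_of_nonneg (by linarith [hx.1])]
  have hpow1 : IntervalIntegrable (fun x : ℝ => (1 - x) ^ (-(1/2):ℝ)) volume a 1 := by
    have h0 : IntervalIntegrable (fun x : ℝ => x ^ (-(1/2):ℝ)) volume (1 - a) (1 - 1) :=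
      intervalIntegral.intervalIntegrable_rpow' (by norm_num)
    simpa using h0.comp_sub_left 1
  have hpow2 : IntervalIntegrable (fun x : ℝ => (x - 1) ^ (-(1/2):ℝ)) volume 1 2 := by
    have h0 : IntervalIntegrable (fun x : ℝ => x ^ (-(1/2):ℝ)) volume 0 1 :=
      intervalIntegral.intervalIntegrable_rpow' (by norm_num)
    have h1 := h0.comp_sub_right 1
    norm_num at h1
    exact h1
  have hf1int : IntervalIntegrable
      (fun x : ℝ => (1 - x) ^ (-(1/2):ℝ) * (x + 1) ^ (1/2 - 2*s)) volume a 1 := by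
    apply hpow1.mul_continuousOn
    apply ContinuousOn.rpow_const (by fun_prop)
    intro x hx
    rw [Set.uIcc_of_le ha1] at hx
    exact Or.inl (by nlinarith [hx.1])
  have hf2int : IntervalIntegrable
      (fun x : ℝ => (x - 1) ^ (-(1/2):ℝ) * (x + 1) ^ (1/2 - 2*s)) volume 1 2 := by
    apply hpow2.mul_continuousOn
    apply ContinuousOn.rpow_const (by fun_prop)
    intro x hx
    rw [Set.uIcc_of_le h12] at hx
    exact Or.inl (by nlinarith [hx.1])
  have gint1 : IntervalIntegrable (fun x => (mwt s x)⁻¹) volume a 1 := by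
    rw [intervalIntegrable_iff] at hf1int ⊢
    apply hf1int.congr_fun _ measurableSet_uIoc
    intro x hx
    rw [Set.uIoc_of_le ha1] at hx
    exact (geq1 x ⟨hx.1.le, hx.2⟩).symm
  have gint2 : IntervalIntegrable (fun x => (mwt s x)⁻¹) volume 1 2 := by
    rw [intervalIntegrable_iff] at hf2int ⊢
    apply hf2int.congr_fun _ measurableSet_uIoc
    intro x hx
    rw [Set.uIoc_of_le h12] at hx
    exact (geq2 x ⟨hx.1.le, by linarith [hx.2]⟩).symm
  have gint3 : IntervalIntegrable (fun x => (mwt s x)⁻¹) volume 2 b := by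
    apply ContinuousOn.intervalIntegrable
    apply ContinuousOn.inv₀ ((mwt_continuous s).continuousOn)
    intro x hx
    rw [Set.uIcc_of_le hb] at hx
    have h2x : (2:ℝ) ≤ x := hx.1
    have hpos : 0 < mwt s x := by
      unfold mwt
      have hax : |x| = x := abs_of_pos (by linarith)
      rw [hax]
      exact mul_pos
        (Real.rpow_pos_of_pos (abs_pos.mpr (sub_ne_zero.mpr (by norm_num; linarith))) _)
        (Real.rpow_pos_of_pos (by linarith) _)
    exact ne_of_gt hpos
  have haux : ∀ x : ℝ, 0 ≤ x → x ≤ 2 → (x + 1) ^ (1/2 - 2*s) ≤ 9 := by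
    intro x hx0 hx2
    calc (x+1) ^ (1/2 - 2*s) ≤ (x+1) ^ (3/2 : ℝ) :=
          Real.rpow_le_rpow_of_exponent_le (by linarith) (by linarith)
      _ ≤ (3:ℝ) ^ (3/2 : ℝ) := Real.rpow_le_rpow (by linarith) (by linarith) (by norm_num)
      _ ≤ (3:ℝ) ^ (2 : ℝ) := Real.rpow_le_rpow_of_exponent_le (by norm_num) (by norm_num)
      _ = 9 := by
          rw [show (2:ℝ) = ((2:ℕ):ℝ) by norm_num, Real.rpow_natCast]; norm_num
  have hbd1 : ∀ x ∈ Set.Icc a 1, (mwt s x)⁻¹ ≤ 9 * (1 - x) ^ (-(1/2):ℝ) := by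
    intro x hx
    rw [geq1 x hx, mul_comm (9:ℝ)]
    exact mul_le_mul_of_nonneg_left (haux x (by linarith [hx.1]) (by linarith [hx.2]))
      (Real.rpow_nonneg (by linarith [hx.2]) _)
  have hbd2 : ∀ x ∈ Set.Icc (1:ℝ) 2, (mwt s x)⁻¹ ≤ 9 * (x - 1) ^ (-(1/2):ℝ) := by
    intro x hx
    rw [geq2 x ⟨hx.1, by linarith [hx.2]⟩, mul_comm (9:ℝ)]
    exact mul_le_mul_of_nonneg_left (haux x (by linarith [hx.1]) hx.2)
      (Real.rpow_nonneg (by linarith [hx.1]) _)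
  have h42 : (4:ℝ) ^ ((1:ℝ)/2) = 2 := by
    rw [← Real.sqrt_eq_rpow, show (4:ℝ) = 2^2 by norm_num,
      Real.sqrt_sq (by norm_num : (0:ℝ) ≤ 2)]
  have e4 : (4:ℝ) ^ (-(1/2):ℝ) = 1/2 := by
    rw [Real.rpow_neg (by norm_num : (0:ℝ) ≤ 4)]
    rw [show ((1:ℝ)/2 : ℝ) = ((1:ℝ)/2) from rfl] at h42
    rw [h42]
    norm_num
  have hbd3 : ∀ x ∈ Set.Icc (2:ℝ) b, (mwt s x)⁻¹ ≤ 2 * (x + 1) ^ (-(2*s)) := by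
    intro x hx
    have h2x : (2:ℝ) ≤ x := hx.1
    rw [geq2 x ⟨by linarith, hx.2⟩]
    have step1 : (x - 1) ^ (-(1/2):ℝ) ≤ 2 * (x + 1) ^ (-(1/2):ℝ) := by
      have e2 : (x - 1 : ℝ) ^ (-(1/2):ℝ) ≤ ((x+1)/4) ^ (-(1/2):ℝ) :=
        Real.rpow_le_rpow_of_nonpos (by linarith) (by linarith) (by norm_num)
      calc (x - 1 : ℝ) ^ (-(1/2):ℝ) ≤ ((x+1)/4) ^ (-(1/2):ℝ) := e2
        _ = (x+1) ^ (-(1/2):ℝ) / (4:ℝ) ^ (-(1/2):ℝ) :=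
            Real.div_rpow (by linarith) (by norm_num) _
        _ = 2 * (x + 1) ^ (-(1/2):ℝ) := by rw [e4]; ring
    calc (x - 1) ^ (-(1/2):ℝ) * (x + 1) ^ (1/2 - 2*s)
        ≤ (2 * (x + 1) ^ (-(1/2):ℝ)) * (x + 1) ^ (1/2 - 2*s) :=
          mul_le_mul_of_nonneg_right step1 (Real.rpow_nonneg (by linarith) _)
      _ = 2 * (x + 1) ^ (-(2*s)) := by
          rw [mul_assoc, ← Real.rpow_add (by linarith : (0:ℝ) < x+1),
            show -(1/2) + (1/2 - 2*s) = -(2*s) by ring]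
  have hb1int : IntervalIntegrable (fun x : ℝ => 9 * (1 - x) ^ (-(1/2):ℝ)) volume a 1 :=
    hpow1.const_mul 9
  have hb2int : IntervalIntegrable (fun x : ℝ => 9 * (x - 1) ^ (-(1/2):ℝ)) volume 1 2 :=
    hpow2.const_mul 9
  have hb3int : IntervalIntegrable (fun x : ℝ => 2 * (x + 1) ^ (-(2*s))) volume 2 b := by
    apply ContinuousOn.intervalIntegrable
    apply continuousOn_const.mul
    apply ContinuousOn.rpow_const (by fun_prop)
    intro x hx
    rw [Set.uIcc_of_le hb] at hx
    exact Or.inl (by nlinarith [hx.1])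
  have comp1 : (∫ x in a..1, (1 - x) ^ (-(1/2):ℝ)) ≤ 2 := by
    rw [intervalIntegral.integral_comp_sub_left (fun y : ℝ => y ^ (-(1/2):ℝ)) 1,
      show (1:ℝ) - 1 = 0 by norm_num, integral_rpow (Or.inl (by norm_num)),
      show (-(1/2:ℝ)+1) = 1/2 by norm_num, Real.zero_rpow (by norm_num : (1/2:ℝ) ≠ 0)]
    have h1 : ((1:ℝ) - a) ^ ((1:ℝ)/2) ≤ 1 :=
      Real.rpow_le_one (by linarith) (by linarith) (by norm_num)
    rw [show ((1:ℝ)/2 : ℝ) = ((1:ℝ)/2) from rfl] at h1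
    linarith
  have comp2 : (∫ x in (1:ℝ)..2, (x - 1) ^ (-(1/2):ℝ)) ≤ 2 := by
    rw [intervalIntegral.integral_comp_sub_right (fun y : ℝ => y ^ (-(1/2):ℝ)) 1,
      show (1:ℝ) - 1 = 0 by norm_num, show (2:ℝ) - 1 = 1 by norm_num,
      integral_rpow (Or.inl (by norm_num)),
      show (-(1/2:ℝ)+1) = 1/2 by norm_num, Real.zero_rpow (by norm_num : (1/2:ℝ) ≠ 0),
      Real.one_rpow]
    norm_num
  have compJ : (∫ x in (2:ℝ)..b, (x + 1) ^ (-(2*s))) ≤ 4 * (b-a) ^ (-(2*s)+1) / (-(2*s)+1) := by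
    rw [intervalIntegral.integral_comp_add_right (fun y : ℝ => y ^ (-(2*s))) 1,
      show (2:ℝ) + 1 = 3 by norm_num, integral_rpow (Or.inl (by linarith))]
    have h3nn : (0:ℝ) ≤ (3:ℝ) ^ (-(2*s)+1) := Real.rpow_nonneg (by norm_num) _
    have step3 : (b + 1) ^ (-(2*s)+1) ≤ 4 * (b - a) ^ (-(2*s)+1) := by
      calc (b + 1) ^ (-(2*s)+1) ≤ (2 * (b - a)) ^ (-(2*s)+1) :=
            Real.rpow_le_rpow (by linarith) hb2a (by linarith)
        _ = 2 ^ (-(2*s)+1) * (b - a) ^ (-(2*s)+1) :=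
            Real.mul_rpow (by norm_num) (by linarith)
        _ ≤ 4 * (b - a) ^ (-(2*s)+1) := by
            apply mul_le_mul_of_nonneg_right _ (Real.rpow_nonneg (by linarith) _)
            calc (2 : ℝ) ^ (-(2*s)+1) ≤ 2 ^ (2 : ℝ) :=
                  Real.rpow_le_rpow_of_exponent_le one_le_two (by linarith)
              _ = 4 := by
                  rw [show (2 : ℝ) = ((2 : ℕ) : ℝ) by norm_num, Real.rpow_natCast]
                  norm_num
    calc ((b+1) ^ (-(2*s)+1) - (3:ℝ) ^ (-(2*s)+1)) / (-(2*s)+1)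
        ≤ (b+1) ^ (-(2*s)+1) / (-(2*s)+1) := by gcongr; linarith
      _ ≤ 4 * (b-a) ^ (-(2*s)+1) / (-(2*s)+1) := by gcongr
  have hS1 : (∫ x in a..1, (mwt s x)⁻¹) ≤ 18 := by
    have h := intervalIntegral.integral_mono_on ha1 gint1 hb1int hbd1
    rw [intervalIntegral.integral_const_mul] at h
    linarith
  have hS2 : (∫ x in (1:ℝ)..2, (mwt s x)⁻¹) ≤ 18 := by
    have h := intervalIntegral.integral_mono_on h12 gint2 hb2int hbd2
    rw [intervalIntegral.integral_const_mul] at h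
    linarith
  have hS3 : (∫ x in (2:ℝ)..b, (mwt s x)⁻¹) ≤ 8 / (-(2*s)+1) * (b-a) ^ (-(2*s)+1) := by
    have h := intervalIntegral.integral_mono_on hb gint3 hb3int hbd3
    rw [intervalIntegral.integral_const_mul] at h
    have h8 : 2 * (∫ x in (2:ℝ)..b, (x + 1) ^ (-(2*s))) ≤
        8 / (-(2*s)+1) * (b-a) ^ (-(2*s)+1) := by
      rw [div_mul_eq_mul_div, show (8:ℝ) * (b-a) ^ (-(2*s)+1) / (-(2*s)+1)
        = 2 * (4 * (b-a) ^ (-(2*s)+1) / (-(2*s)+1)) by ring]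
      linarith [compJ]
    linarith
  have hsplit : (∫ x in a..b, (mwt s x)⁻¹) = (∫ x in a..1, (mwt s x)⁻¹)
      + (∫ x in (1:ℝ)..2, (mwt s x)⁻¹) + (∫ x in (2:ℝ)..b, (mwt s x)⁻¹) := by
    rw [intervalIntegral.integral_add_adjacent_intervals gint1 gint2,
      intervalIntegral.integral_add_adjacent_intervals (gint1.trans gint2) gint3]
  have hone : (1:ℝ) ≤ (b-a) ^ (-(2*s)+1) := Real.one_le_rpow (by linarith) (by linarith)
  have hI2 : (∫ x in a..b, (mwt s x)⁻¹) ≤ C2 * (b - a) ^ (-(2 * s) + 1) := by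
    rw [hsplit, hC2]
    have : (36 + 8 / (-(2 * s) + 1)) * (b - a) ^ (-(2 * s) + 1)
        = 36 * (b - a) ^ (-(2 * s) + 1) + 8 / (-(2 * s) + 1) * (b - a) ^ (-(2 * s) + 1) := by
      ring
    rw [this]
    have h36 : (36:ℝ) ≤ 36 * (b - a) ^ (-(2 * s) + 1) := by linarith
    linarith [hS1, hS2, hS3]
  -- nonnegativity
  have hI1nn : 0 ≤ ∫ x in a..b, mwt s x :=
    intervalIntegral.integral_nonneg hab (fun x _ => mwt_nonneg s x)
  have hI2nn : 0 ≤ ∫ x in a..b, (mwt s x)⁻¹ :=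
    intervalIntegral.integral_nonneg hab (fun x _ => inv_nonneg.mpr (mwt_nonneg s x))
  have hr1 : (0:ℝ) ≤ (b-a) ^ (-(2:ℝ)) := Real.rpow_nonneg (by linarith) _
  refine ⟨?_, ?_, ?_⟩
  · calc (∫ x in a..b, mwt s x) ≤ C1 * (b - a) ^ (2 * s + 1) := hI1
      _ ≤ (C1 + C2 + C1 * C2) * (b - a) ^ (2 * s + 1) := by
          apply mul_le_mul_of_nonneg_right _ (Real.rpow_nonneg (by linarith) _)
          nlinarith
  · calc (∫ x in a..b, (mwt s x)⁻¹) ≤ C2 * (b - a) ^ (-(2 * s) + 1) := hI2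
      _ ≤ (C1 + C2 + C1 * C2) * (b - a) ^ (-(2 * s) + 1) := by
          apply mul_le_mul_of_nonneg_right _ (Real.rpow_nonneg (by linarith) _)
          nlinarith
  · have key : (b-a) ^ (-(2:ℝ)) * ((b-a) ^ (2*s+1) * (b-a) ^ (-(2*s)+1)) = 1 := by
      rw [← Real.rpow_add hbapos, ← Real.rpow_add hbapos,
        show (-(2:ℝ)) + (2*s+1 + (-(2*s)+1)) = 0 by ring, Real.rpow_zero]
    calc (b - a) ^ (-(2:ℝ)) * (∫ x in a..b, mwt s x) * (∫ x in a..b, (mwt s x)⁻¹)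
        ≤ (b - a) ^ (-(2:ℝ)) * (C1 * (b - a) ^ (2*s+1)) * (C2 * (b - a) ^ (-(2*s)+1)) := by
          apply mul_le_mul (mul_le_mul_of_nonneg_left hI1 hr1) ?_ hI2nn ?_
          · rw [show -(2*s)+1 = -(2 * s) + 1 by ring]; exact hI2
          · exact mul_nonneg hr1 (mul_nonneg hC1pos.le (Real.rpow_nonneg (by linarith) _))
      _ = C1 * C2 * ((b-a) ^ (-(2:ℝ)) * ((b-a) ^ (2*s+1) * (b-a) ^ (-(2*s)+1))) := by ring
      _ = C1 * C2 := by rw [key, mul_one]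
      _ ≤ C1 + C2 + C1 * C2 := by nlinarith
end
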